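/- arXiv:1908.10779 — 2 statements merged into one kernel-verified Lean document; each statement's English description precedes it below -/
import Mathlib

section
/- Fix n ≥ 1, M ≥ 2, rate coefficients γ_{0,j} > 0 and γ_{i,j} ≥ 0 (for i = 1,…,M, j = 1,…,n), and switching rates β₁,…,β_M > 0. Let π_i = (1/β_i)/(Σ_{l=1}^M 1/β_l) and define p₀ : ℕⁿ × {1,…,M} → ℝ by p₀(x, i) = π_i · ∏_{j=1}^n 𝒫(x_j; γ_{i,j}/γ_{0,j}) (extended by 0 for negative coordinates). Then: (a) p₀ is a probability mass function; (b) for every i and every x ∈ ℕⁿ, Σ_{j=1}^n [ γ_{i,j}·(p₀(x − e_j, i) − p₀(x, i)) + γ_{0,j}·((x_j + 1)·p₀(x + e_j, i) − x_j·p₀(x, i)) ] = 0, i.e. each section p₀(·, i) is stationary for the fast lower-resolution interfacing network in environment Y_i; (c) for every i, β_{i−1}·π_{i−1} = β_i·π_i (indices mod M), i.e. the {1,…,M}-marginal of p₀ is stationary for the cyclic switching network. Hence the zero-order stationary marginal PMF of the target species is the Poisson mixture Σ_{i=1}^M a_i(β)·∏_{j=1}^n 𝒫(x_j; γ_{i,j}/γ_{0,j})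 with weights a_i(β) = π_i. -/
/-- The Poisson probability mass function with mean `lam`: `𝒫(x;λ) = e^{−λ} λ^x / x!`. -/
noncomputable def poissonPMF (lam : ℝ) (x : ℕ) : ℝ :=
  Real.exp (-lam) * lam ^ x / (Nat.factorial x : ℝ)

/-- The Poisson PMF extended to integer arguments by `0` on negative values. -/
noncomputable def poissonPMFZ (lam : ℝ) (x : ℤ) : ℝ :=
  if 0 ≤ x then poissonPMF lam x.toNat else 0

lemma poissonPMF_nonneg {lam : ℝ} (h : 0 ≤ lam) (x : ℕ) : 0 ≤ poissonPMF lam x := by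
  unfold poissonPMF
  positivity

lemma poissonPMFZ_nonneg {lam : ℝ} (h : 0 ≤ lam) (x : ℤ) : 0 ≤ poissonPMFZ lam x := by
  unfold poissonPMFZ
  split
  · exact poissonPMF_nonneg h _
  · exact le_rfl

lemma poissonPMFZ_natCast (lam : ℝ) (m : ℕ) : poissonPMFZ lam (m : ℤ) = poissonPMF lam m := by
  simp [poissonPMFZ]

lemma hasSum_poissonPMF {lam : ℝ} (h : 0 ≤ lam) : HasSum (poissonPMF lam) 1 := by
  have := ProbabilityTheory.poissonPMFRealSum ⟨lam, h⟩
  exact this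

/-- The recurrence `λ·𝒫(m) = (m+1)·𝒫(m+1)`. -/
lemma poissonPMF_step (lam : ℝ) (m : ℕ) :
    lam * poissonPMF lam m = ((m : ℝ) + 1) * poissonPMF lam (m + 1) := by
  unfold poissonPMF
  rw [Nat.factorial_succ]
  have hm : ((m : ℝ) + 1) ≠ 0 := by positivity
  have hf : (Nat.factorial m : ℝ) ≠ 0 := by positivity
  push_cast
  field_simp
  ring

/-- Product of `HasSum`s over a finite index: the Poisson-type pi sum. -/
lemma hasSum_pi_prod : ∀ (n : ℕ) (f : Fin n → ℕ → ℝ) (s : Fin n → ℝ),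
    (∀ j k, 0 ≤ f j k) → (∀ j, HasSum (f j) (s j)) →
    HasSum (fun x : Fin n → ℕ => ∏ j, f j (x j)) (∏ j, s j) := by
  intro n
  induction n with
  | zero =>
    intro f s _ _
    simp only [Finset.univ_eq_empty, Finset.prod_empty]
    exact hasSum_single (f := fun _ : Fin 0 → ℕ => (1 : ℝ)) default
      (fun b hb => absurd (Subsingleton.elim b default) hb)
  | succ m ih =>
    intro f s h0 hs
    have ihm := ih (fun j => f j.succ) (fun j => s j.succ)
      (fun j k => h0 _ _) (fun j => hs _)
    have hsum : Summable fun p : ℕ × (Fin m → ℕ) =>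
        f 0 p.1 * ∏ j : Fin m, f j.succ (p.2 j) :=
      Summable.mul_of_nonneg (f := f 0)
        (g := fun x : Fin m → ℕ => ∏ j : Fin m, f j.succ (x j))
        (hs 0).summable ihm.summable
        (fun k => h0 0 k) (fun x => Finset.prod_nonneg fun j _ => h0 _ _)
    have key := (hs 0).mul ihm hsum
    rw [← (Fin.consEquiv (fun _ : Fin (m + 1) => ℕ)).hasSum_iff]
    have hFe : ((fun x : Fin (m + 1) → ℕ => ∏ j, f j (x j)) ∘
        (Fin.consEquiv (fun _ : Fin (m + 1) => ℕ)))
        = fun p : ℕ × (Fin m → ℕ) => f 0 p.1 * ∏ j : Fin m, f j.succ (p.2 j) := by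
      funext p
      simp [Fin.consEquiv, Fin.prod_univ_succ]
    rw [hFe, Fin.prod_univ_succ]
    exact key

/-- Lower-resolution control: with switching weights
`π_i = (1/β_i)/(Σ_l 1/β_l)` and Poisson means `γ_{i,j}/γ_{0,j}`, the function
`p₀(x,i) = π_i ∏_j 𝒫(x_j; γ_{i,j}/γ_{0,j})` is (a) a PMF on `ℕⁿ × {1,…,M}`;
(b) each section `p₀(·,i)` is stationary for the fast production–degradation network
in environment `Y_i`; and (c) the `{1,…,M}`-marginal satisfies the cyclic-balance
condition `β_{i−1} π_{i−1} = β_i π_i` (indices mod `M`). -/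
theorem lower_resolution_zero_order_pmf
    (n : ℕ) (hn : 1 ≤ n) (M : ℕ) (hM : 2 ≤ M)
    (γ₀ : Fin n → ℝ) (γ : Fin M → Fin n → ℝ) (β : Fin M → ℝ)
    (hγ₀ : ∀ j, 0 < γ₀ j) (hγ : ∀ i j, 0 ≤ γ i j) (hβ : ∀ i, 0 < β i) :
    ∀ π : Fin M → ℝ, (π = fun i => (1 / β i) / ∑ l, 1 / β l) →
    ∀ p₀ : (Fin n → ℤ) → Fin M → ℝ,
      (p₀ = fun x i => π i * ∏ j, poissonPMFZ (γ i j / γ₀ j) (x j)) →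
      -- (a) probability mass function
      (((∀ x i, 0 ≤ p₀ x i) ∧
        Summable (fun z : (Fin n → ℕ) × Fin M => p₀ (fun j => (z.1 j : ℤ)) z.2) ∧
        (∑' z : (Fin n → ℕ) × Fin M, p₀ (fun j => (z.1 j : ℤ)) z.2 = 1)) ∧
      -- (b) stationarity of each section for the fast interfacing network
       (∀ i : Fin M, ∀ x : Fin n → ℕ,
          ∑ j, (γ i j * (p₀ (Function.update (fun j' => ((x j' : ℤ))) j ((x j : ℤ) - 1)) i
                          - p₀ (fun j' => (x j' : ℤ)) i)
              + γ₀ j * (((x j : ℝ) + 1)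
                          * p₀ (Function.update (fun j' => ((x j' : ℤ))) j ((x j : ℤ) + 1)) i
                        - (x j : ℝ) * p₀ (fun j' => (x j' : ℤ)) i)) = 0) ∧
      -- (c) cyclic balance for the switching marginal (indices mod M)
       (∀ i i' : Fin M, ((i : ℕ) + 1) % M = (i' : ℕ) → β i * π i = β i' * π i')) := by
  intro π hπ p₀ hp₀
  have hMpos : 0 < M := by omega
  haveI : NeZero M := ⟨by omega⟩
  have hlam : ∀ i j, 0 ≤ γ i j / γ₀ j := fun i j => div_nonneg (hγ i j) (hγ₀ j).le
  -- sum of reciprocals is positive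
  have hS : 0 < ∑ l, 1 / β l :=
    Finset.sum_pos (fun l _ => one_div_pos.mpr (hβ l)) ⟨⟨0, hMpos⟩, Finset.mem_univ _⟩
  have hπ_nonneg : ∀ i, 0 ≤ π i := by
    intro i; rw [hπ]
    exact div_nonneg (one_div_nonneg.mpr (hβ i).le) hS.le
  have hπ_sum : ∑ i, π i = 1 := by
    rw [hπ]
    rw [← Finset.sum_div]
    exact div_self hS.ne'
  -- the nat-restricted section sums
  set G : Fin M → (Fin n → ℕ) → ℝ :=
    fun i x => ∏ j, poissonPMF (γ i j / γ₀ j) (x j) with hG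
  have hGsum : ∀ i, HasSum (G i) 1 := by
    intro i
    have := hasSum_pi_prod n (fun j => poissonPMF (γ i j / γ₀ j)) (fun _ => 1)
      (fun j k => poissonPMF_nonneg (hlam i j) k) (fun j => hasSum_poissonPMF (hlam i j))
    simpa using this
  have hp₀nat : ∀ (x : Fin n → ℕ) i, p₀ (fun j => (x j : ℤ)) i = π i * G i x := by
    intro x i
    rw [hp₀]
    simp only [hG, poissonPMFZ_natCast]
  refine ⟨⟨?_, ?_⟩, ?_, ?_⟩
  · -- (a) nonneg
    have hnn : ∀ x i, 0 ≤ p₀ x i := by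
      intro x i
      rw [hp₀]
      exact mul_nonneg (hπ_nonneg i)
        (Finset.prod_nonneg fun j _ => poissonPMFZ_nonneg (hlam i j) _)
    exact hnn
  · -- (a) summable and tsum
    have hfeq : (fun z : (Fin n → ℕ) × Fin M => p₀ (fun j => (z.1 j : ℤ)) z.2)
        = fun z => π z.2 * G z.2 z.1 := by
      funext z; exact hp₀nat z.1 z.2
    have hsummable : Summable (fun z : (Fin n → ℕ) × Fin M => π z.2 * G z.2 z.1) := by
      rw [summable_prod_of_nonneg
        (fun z => mul_nonneg (hπ_nonneg _) (Finset.prod_nonneg fun j _ =>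
          poissonPMF_nonneg (hlam _ j) _))]
      constructor
      · intro x; exact (hasSum_fintype _).summable
      · have : (fun x : Fin n → ℕ => ∑' i : Fin M, π i * G i x)
            = fun x => ∑ i, π i * G i x := by
          funext x; exact tsum_fintype _
        rw [this]
        exact summable_sum fun i _ => ((hGsum i).mul_left (π i)).summable
    rw [hfeq]
    refine ⟨hsummable, ?_⟩
    rw [Summable.tsum_prod hsummable]
    have h1 : ∀ x : Fin n → ℕ, ∑' i : Fin M, π i * G i x = ∑ i, π i * G i x :=
      fun x => tsum_fintype _
    calc ∑' (x : Fin n → ℕ) (i : Fin M), π i * G i x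
        = ∑' x : Fin n → ℕ, ∑ i, π i * G i x := by
          exact tsum_congr h1
      _ = ∑ i, ∑' x, π i * G i x :=
          Summable.tsum_finsetSum fun i _ => ((hGsum i).mul_left (π i)).summable
      _ = ∑ i, π i := by
          refine Finset.sum_congr rfl fun i _ => ?_
          rw [((hGsum i).mul_left (π i)).tsum_eq, mul_one]
      _ = 1 := hπ_sum
  · -- (b)
    intro i x
    refine Finset.sum_eq_zero fun j _ => ?_
    set lam := γ i j / γ₀ j with hlamdef
    have hγ₀j := hγ₀ j
    have hγγ : γ₀ j * lam = γ i j := by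
      rw [hlamdef]
      field_simp [hγ₀j.ne']
    -- product decomposition
    have hprod : ∀ v : ℤ,
        ∏ j', poissonPMFZ (γ i j' / γ₀ j') (Function.update (fun j' => ((x j' : ℤ))) j v j')
        = poissonPMFZ lam v *
          ∏ j' ∈ Finset.univ.erase j, poissonPMFZ (γ i j' / γ₀ j') ((x j' : ℤ)) := by
      intro v
      rw [← Finset.mul_prod_erase Finset.univ _ (Finset.mem_univ j)]
      congr 1
      · rw [Function.update_self]
      · refine Finset.prod_congr rfl fun j' hj' => ?_
        rw [Function.update_of_ne (Finset.ne_of_mem_erase hj')]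
    have hprodx :
        ∏ j', poissonPMFZ (γ i j' / γ₀ j') ((x j' : ℤ))
        = poissonPMFZ lam ((x j : ℤ)) *
          ∏ j' ∈ Finset.univ.erase j, poissonPMFZ (γ i j' / γ₀ j') ((x j' : ℤ)) :=
      Finset.mul_prod_erase Finset.univ _ (Finset.mem_univ j) |>.symm
    set P := ∏ j' ∈ Finset.univ.erase j, poissonPMFZ (γ i j' / γ₀ j') ((x j' : ℤ)) with hP
    set m := x j with hm
    -- key one-variable identities
    have h1 : γ i j * poissonPMFZ lam ((m : ℤ) - 1)
        = γ₀ j * (m : ℝ) * poissonPMFZ lam (m : ℤ) := by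
      cases m with
      | zero =>
        simp [poissonPMFZ]
      | succ k =>
        have : ((k : ℤ) + 1 - 1 : ℤ) = (k : ℤ) := by ring
        push_cast
        rw [this, poissonPMFZ_natCast]
        have hk1 : ((k : ℤ) + 1) = ((k + 1 : ℕ) : ℤ) := by push_cast; ring
        rw [hk1, poissonPMFZ_natCast]
        rw [← hγγ]
        have := poissonPMF_step lam k
        push_cast
        nlinarith [this]
    have h2 : γ₀ j * ((m : ℝ) + 1) * poissonPMFZ lam ((m : ℤ) + 1)
        = γ i j * poissonPMFZ lam (m : ℤ) := by
      have hk1 : ((m : ℤ) + 1) = ((m + 1 : ℕ) : ℤ) := by push_cast; ring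
      rw [hk1, poissonPMFZ_natCast, poissonPMFZ_natCast, ← hγγ]
      have := poissonPMF_step lam m
      nlinarith [this]
    -- assemble
    rw [hp₀]
    simp only [hprod, hprodx]
    linear_combination (π i * P) * h1 + (π i * P) * h2
  · -- (c)
    intro i i' _
    have key : ∀ k : Fin M, β k * π k = 1 / ∑ l, 1 / β l := by
      intro k
      rw [hπ]
      rw [mul_div_assoc']
      congr 1
      rw [mul_one_div, div_self (hβ k).ne']
    rw [key i, key i']
end

section
/- Fix n ≥ 1, targets k_j ≥ 1 and rates c > 0, d_j > 0 with σ_j = c/d_j, for j = 1,…,n. For each j let π_{σ_j}^{(j)} be the unique stationary PMF of the birth–death chain on ℕ with birth rate c and death rate d_j·x^{(k_j+1)}. Then the product PMF p_σ(x) = ∏_{j=1}^n π_{σ_j}^{(j)}(x_j) on ℕⁿ satisfies the joint stationarity equation Σ_{j=1}^n [ c·(p_σ(x − e_j) − p_σ(x)) + d_j·((x_j+1)^{(k_j+1)}·p_σ(x + e_j) − x_j^{(k_j+1)}·p_σ(x)) ] = 0 for every x ∈ ℕⁿ (with p_σ extended by 0 for negative coordinates), and Σ_{x∈ℕⁿ}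 |p_σ(x) − ∏_{j=1}^n δ_{x_j, k_j}| → 0 as max_j σ_j → 0⁺. -/
/-- The unnormalized stationary weights of the reduced higher-resolution interfacing
network with target copy-number `k` and ratio `σ = c/d`:
`w(x) = 0` for `x < k` and `w(k+m) = σ^m / ∏_{l=1}^m (k+l)^{(k+1)}`. -/
noncomputable def deathBirthWeight (k : ℕ) (σ : ℝ) (x : ℕ) : ℝ :=
  if x < k then 0
  else σ ^ (x - k) / ∏ l ∈ Finset.Icc 1 (x - k), ((k + l).descFactorial (k + 1) : ℝ)

noncomputable def vInt (k : ℕ) (σ : ℝ) (m : ℤ) : ℝ :=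
  if 0 ≤ m then deathBirthWeight k σ m.toNat else 0

lemma desc_ne_zero {a b : ℕ} (h : b ≤ a) : ((a.descFactorial b : ℝ)) ≠ 0 := by
  have : a.descFactorial b ≠ 0 := by
    intro h0
    exact absurd (Nat.descFactorial_eq_zero_iff_lt.mp h0) (not_lt.mpr h)
  exact_mod_cast this

lemma db (k : ℕ) (c d : ℝ) (hd : 0 < d) (x : ℕ) :
    d * (((x + 1).descFactorial (k + 1) : ℝ)) * deathBirthWeight k (c / d) (x + 1)
      = c * deathBirthWeight k (c / d) x := by
  by_cases hx : x < k
  · have h1 : (x + 1).descFactorial (k + 1) = 0 :=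
      Nat.descFactorial_eq_zero_iff_lt.mpr (by omega)
    have h2 : deathBirthWeight k (c / d) x = 0 := by rw [deathBirthWeight, if_pos hx]
    rw [h1, h2]
    simp
  · push_neg at hx
    obtain ⟨m, rfl⟩ := Nat.exists_eq_add_of_le hx
    rw [show k + m + 1 = (k + (m + 1)) from by omega]
    rw [deathBirthWeight, deathBirthWeight, if_neg (by omega), if_neg (by omega),
      show k + (m + 1) - k = m + 1 from by omega, show k + m - k = m from by omega,
      Finset.prod_Icc_succ_top (by omega)]
    generalize hA0 : (((k + (m + 1)).descFactorial (k + 1) : ℝ)) = A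
    generalize hP0 : (∏ l ∈ Finset.Icc 1 m, ((k + l).descFactorial (k + 1) : ℝ)) = P
    have hA : A ≠ 0 := hA0 ▸ desc_ne_zero (by omega)
    have hP : P ≠ 0 := by
      rw [← hP0]
      apply Finset.prod_ne_zero_iff.mpr
      intro l hl
      exact desc_ne_zero (by have := (Finset.mem_Icc.mp hl).1; omega)
    rw [pow_succ]
    field_simp

lemma vInt_natCast (k : ℕ) (σ : ℝ) (x : ℕ) : vInt k σ (x : ℤ) = deathBirthWeight k σ x := by
  simp [vInt]

lemma onedim (k : ℕ) (c d : ℝ) (hd : 0 < d) (x : ℕ) :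
    c * (vInt k (c / d) ((x : ℤ) - 1) - vInt k (c / d) (x : ℤ))
      + d * (((x + 1).descFactorial (k + 1) : ℝ) * vInt k (c / d) ((x : ℤ) + 1)
             - ((x.descFactorial (k + 1)) : ℝ) * vInt k (c / d) (x : ℤ)) = 0 := by
  have hsucc : vInt k (c / d) ((x : ℤ) + 1) = deathBirthWeight k (c / d) (x + 1) := by
    rw [show (x : ℤ) + 1 = ((x + 1 : ℕ) : ℤ) from by push_cast; ring, vInt_natCast]
  rw [hsucc, vInt_natCast]
  rcases x with _ | y
  · have hneg : vInt k (c / d) ((0 : ℕ) - 1 : ℤ) = 0 := by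
      rw [vInt, if_neg (by norm_num)]
    rw [hneg]
    have h0 := db k c d hd 0
    simp only [Nat.zero_descFactorial_succ] at *
    push_cast at *
    linarith
  · have hpred : vInt k (c / d) (((y + 1 : ℕ) : ℤ) - 1) = deathBirthWeight k (c / d) y := by
      rw [show ((y + 1 : ℕ) : ℤ) - 1 = (y : ℤ) from by push_cast; ring, vInt_natCast]
    rw [hpred]
    have h1 := db k c d hd y
    have h2 := db k c d hd (y + 1)
    push_cast at *
    linarith

lemma part1 (n : ℕ) (k : Fin n → ℕ) (c : ℝ) (d : Fin n → ℝ) (hc : 0 < c) (hd : ∀ j, 0 < d j)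
    (pZ : (Fin n → ℤ) → ℝ)
    (hpZ : pZ = fun x => ∏ j,
          (if 0 ≤ x j then
            deathBirthWeight (k j) (c / d j) (x j).toNat
              / ∑' y : ℕ, deathBirthWeight (k j) (c / d j) y
           else 0))
    (x : Fin n → ℕ) :
    ∑ j, (c * (pZ (Function.update (fun j' => ((x j' : ℤ))) j ((x j : ℤ) - 1))
                - pZ (fun j' => (x j' : ℤ)))
        + d j * (((x j + 1).descFactorial (k j + 1) : ℝ)
                    * pZ (Function.update (fun j' => ((x j' : ℤ))) j ((x j : ℤ) + 1))
                 - ((x j).descFactorial (k j + 1) : ℝ)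
                    * pZ (fun j' => (x j' : ℤ)))) = 0 := by
  have hpZ' : ∀ y : Fin n → ℤ, pZ y
      = ∏ j', vInt (k j') (c / d j') (y j')
          * (∑' y' : ℕ, deathBirthWeight (k j') (c / d j') y')⁻¹ := by
    intro y
    rw [hpZ]
    apply Finset.prod_congr rfl
    intro i _
    by_cases h : 0 ≤ y i
    · rw [if_pos h, vInt, if_pos h, div_eq_mul_inv]
    · rw [if_neg h, vInt, if_neg h, zero_mul]
  apply Finset.sum_eq_zero
  intro j _
  have hupd : ∀ v : ℤ, pZ (Function.update (fun j' => ((x j' : ℤ))) j v)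
      = (vInt (k j) (c / d j) v * (∑' y' : ℕ, deathBirthWeight (k j) (c / d j) y')⁻¹)
        * ∏ j' ∈ Finset.univ \ {j},
            vInt (k j') (c / d j') (x j' : ℤ)
              * (∑' y' : ℕ, deathBirthWeight (k j') (c / d j') y')⁻¹ := by
    intro v
    rw [hpZ']
    rw [← Finset.prod_update_of_mem (Finset.mem_univ j)
      (fun j' => vInt (k j') (c / d j') (x j' : ℤ)
        * (∑' y' : ℕ, deathBirthWeight (k j') (c / d j') y')⁻¹)
      (vInt (k j) (c / d j) v * (∑' y' : ℕ, deathBirthWeight (k j) (c / d j) y')⁻¹)]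
    apply Finset.prod_congr rfl
    intro i _
    by_cases h : i = j
    · subst h; simp
    · simp [Function.update_apply, h]
  have hbase : pZ (fun j' => (x j' : ℤ))
      = (vInt (k j) (c / d j) (x j : ℤ)
          * (∑' y' : ℕ, deathBirthWeight (k j) (c / d j) y')⁻¹)
        * ∏ j' ∈ Finset.univ \ {j},
            vInt (k j') (c / d j') (x j' : ℤ)
              * (∑' y' : ℕ, deathBirthWeight (k j') (c / d j') y')⁻¹ := by
    rw [hpZ']
    exact Finset.prod_eq_mul_prod_sdiff_singleton_of_mem (Finset.mem_univ j) _
  rw [hupd, hupd, hbase]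
  linear_combination ((∏ j' ∈ Finset.univ \ {j},
      vInt (k j') (c / d j') (x j' : ℤ)
        * (∑' y' : ℕ, deathBirthWeight (k j') (c / d j') y')⁻¹)
    * (∑' y' : ℕ, deathBirthWeight (k j) (c / d j) y')⁻¹)
    * onedim (k j) c (d j) (hd j) (x j)

lemma dbw_nonneg (k : ℕ) {σ : ℝ} (hσ : 0 ≤ σ) (x : ℕ) : 0 ≤ deathBirthWeight k σ x := by
  rw [deathBirthWeight]
  split_ifs
  · exact le_refl 0
  · exact div_nonneg (pow_nonneg hσ _) (Finset.prod_nonneg fun l _ => by positivity)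

lemma dbw_self (k : ℕ) (σ : ℝ) : deathBirthWeight k σ k = 1 := by
  simp [deathBirthWeight]

lemma two_le_desc (k l : ℕ) (hk : 1 ≤ k) (hl : 1 ≤ l) : 2 ≤ (k + l).descFactorial (k + 1) := by
  have h := Nat.succ_descFactorial_succ (k + l - 1) k
  rw [show k + l - 1 + 1 = k + l from by omega] at h
  rw [h]
  have hD : 0 < (k + l - 1).descFactorial k := by
    rcases Nat.eq_zero_or_pos ((k + l - 1).descFactorial k) with h0 | h0
    · exact absurd (Nat.descFactorial_eq_zero_iff_lt.mp h0) (by omega)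
    · exact h0
  calc 2 = 2 * 1 := by omega
    _ ≤ (k + l) * (k + l - 1).descFactorial k := Nat.mul_le_mul (by omega) hD

lemma dbw_le (k : ℕ) (hk : 1 ≤ k) {σ : ℝ} (h0 : 0 ≤ σ) (h1 : σ ≤ 1) (x : ℕ) :
    deathBirthWeight k σ x ≤ (if x = k then 1 else 0) + σ * 2 ^ k * (1 / 2) ^ x := by
  rcases lt_trichotomy x k with hx | hx | hx
  · rw [deathBirthWeight, if_pos hx, if_neg (by omega)]
    positivity
  · subst hx
    rw [dbw_self, if_pos rfl]
    have : (0:ℝ) ≤ σ * 2 ^ x * (1 / 2) ^ x := by positivity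
    linarith
  · obtain ⟨m, rfl⟩ := Nat.exists_eq_add_of_le hx.le
    have hm : 1 ≤ m := by omega
    rw [deathBirthWeight, if_neg (by omega), if_neg (by omega),
      show k + m - k = m from by omega]
    have hP : (2:ℝ) ^ m ≤ ∏ l ∈ Finset.Icc 1 m, ((k + l).descFactorial (k + 1) : ℝ) := by
      calc (2:ℝ) ^ m = ∏ _l ∈ Finset.Icc 1 m, (2:ℝ) := by
            rw [Finset.prod_const, Nat.card_Icc]; norm_num
        _ ≤ _ := by
            apply Finset.prod_le_prod (fun _ _ => by norm_num)
            intro l hl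
            exact_mod_cast two_le_desc k l hk (Finset.mem_Icc.mp hl).1
    have hP0 : (0:ℝ) < (2:ℝ) ^ m := by positivity
    have hstep : σ ^ m / ∏ l ∈ Finset.Icc 1 m, ((k + l).descFactorial (k + 1) : ℝ)
        ≤ σ ^ m / 2 ^ m :=
      div_le_div_of_nonneg_left (pow_nonneg h0 m) hP0 hP |>.trans_eq rfl
    have hσm : σ ^ m ≤ σ := by
      calc σ ^ m ≤ σ ^ 1 := pow_le_pow_of_le_one h0 h1 hm
        _ = σ := pow_one σ
    have : σ ^ m / 2 ^ m ≤ σ * 2 ^ k * (1 / 2) ^ (k + m) := by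
      rw [div_eq_mul_inv, ← inv_pow]
      have h2 : ((2:ℝ))⁻¹ ^ m = 2 ^ k * (1 / 2) ^ (k + m) := by
        rw [pow_add]
        field_simp
        rw [← mul_pow]; norm_num
      rw [h2, ← mul_assoc]
      apply mul_le_mul_of_nonneg_right _ (by positivity)
      calc σ ^ m * 2 ^ k ≤ σ * 2 ^ k := by
            apply mul_le_mul_of_nonneg_right hσm (by positivity)
        _ = σ * 2 ^ k := rfl
    linarith [hstep.trans this]

lemma summable_majorant (k : ℕ) (σ : ℝ) :
    Summable (fun x : ℕ => (if x = k then (1:ℝ) else 0) + σ * 2 ^ k * (1 / 2) ^ x) := by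
  apply Summable.add
  · exact summable_of_ne_finset_zero (s := {k}) (fun x hx => by
      simp at hx; simp [hx])
  · exact (summable_geometric_of_lt_one (by norm_num) (by norm_num)).mul_left _

lemma tsum_majorant (k : ℕ) (σ : ℝ) :
    ∑' x : ℕ, ((if x = k then (1:ℝ) else 0) + σ * 2 ^ k * (1 / 2) ^ x)
      = 1 + σ * 2 ^ (k + 1) := by
  rw [Summable.tsum_add (summable_of_ne_finset_zero (s := {k}) (fun x hx => by simp at hx; simp [hx]))
      ((summable_geometric_of_lt_one (by norm_num) (by norm_num)).mul_left _),
    tsum_ite_eq, tsum_mul_left, tsum_geometric_of_lt_one (by norm_num) (by norm_num)]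
  norm_num
  ring

lemma summable_dbw (k : ℕ) (hk : 1 ≤ k) {σ : ℝ} (h0 : 0 ≤ σ) (h1 : σ ≤ 1) :
    Summable (deathBirthWeight k σ) :=
  Summable.of_nonneg_of_le (dbw_nonneg k h0) (dbw_le k hk h0 h1) (summable_majorant k σ)

lemma Z_ge_one (k : ℕ) (hk : 1 ≤ k) {σ : ℝ} (h0 : 0 ≤ σ) (h1 : σ ≤ 1) :
    1 ≤ ∑' y : ℕ, deathBirthWeight k σ y := by
  have := Summable.le_tsum (summable_dbw k hk h0 h1) k (fun b _ => dbw_nonneg k h0 b)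
  rwa [dbw_self] at this

lemma Z_le (k : ℕ) (hk : 1 ≤ k) {σ : ℝ} (h0 : 0 ≤ σ) (h1 : σ ≤ 1) :
    ∑' y : ℕ, deathBirthWeight k σ y ≤ 1 + σ * 2 ^ (k + 1) := by
  rw [← tsum_majorant k σ]
  exact Summable.tsum_le_tsum (dbw_le k hk h0 h1) (summable_dbw k hk h0 h1) (summable_majorant k σ)

lemma tsum_pi_prod : ∀ (n : ℕ) (g : Fin n → ℕ → ℝ), (∀ j y, 0 ≤ g j y) → (∀ j, Summable (g j)) →
    Summable (fun x : Fin n → ℕ => ∏ j, g j (x j))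
      ∧ (∑' x : Fin n → ℕ, ∏ j, g j (x j)) = ∏ j, ∑' y : ℕ, g j y := by
  intro n
  induction n with
  | zero =>
    intro g _ _
    constructor
    · exact .of_finite
    · simp [tsum_eq_single (fun (j : Fin 0) => 0) (fun b hb => absurd (funext fun j => j.elim0) hb)]
  | succ n ih =>
    intro g hnn hsum
    obtain ⟨ihS, ihT⟩ := ih (fun j => g j.succ) (fun j y => hnn j.succ y) (fun j => hsum j.succ)
    have hpair : Summable (fun p : ℕ × (Fin n → ℕ) => g 0 p.1 * ∏ j, g j.succ (p.2 j)) := by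
      apply Summable.mul_of_nonneg (hsum 0) ihS
      · intro y; exact hnn 0 y
      · intro z; exact Finset.prod_nonneg fun j _ => hnn j.succ (z j)
    have hcomp : (fun p : ℕ × (Fin n → ℕ) => g 0 p.1 * ∏ j, g j.succ (p.2 j))
        = (fun x : Fin (n + 1) → ℕ => ∏ j, g j (x j))
            ∘ (Fin.consEquiv (fun _ : Fin (n + 1) => ℕ)) := by
      funext p
      simp [Fin.consEquiv, Fin.prod_univ_succ]
    constructor
    · rw [hcomp] at hpair
      exact (Equiv.summable_iff _).mp hpair
    · have h1 : (∑' x : Fin (n + 1) → ℕ, ∏ j, g j (x j))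
          = ∑' p : ℕ × (Fin n → ℕ), g 0 p.1 * ∏ j, g j.succ (p.2 j) := by
        rw [← Equiv.tsum_eq (Fin.consEquiv (fun _ : Fin (n + 1) => ℕ))
          (fun x : Fin (n + 1) → ℕ => ∏ j, g j (x j))]
        apply tsum_congr
        intro p
        simp [Fin.consEquiv, Fin.prod_univ_succ]
      have hinner : ∀ a : ℕ, Summable (fun z : Fin n → ℕ => g 0 a * ∏ j, g j.succ (z j)) :=
        fun a => ihS.mul_left _
      rw [h1, Summable.tsum_prod' hpair hinner]
      have h2 : ∀ a : ℕ, (∑' z : Fin n → ℕ, g 0 a * ∏ j, g j.succ (z j))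
          = g 0 a * ∏ j : Fin n, ∑' y : ℕ, g j.succ y := by
        intro a
        rw [tsum_mul_left, ihT]
      rw [tsum_congr h2, tsum_mul_right, Fin.prod_univ_succ]

lemma one_sub_prod_le {ι : Type*} [DecidableEq ι] (s : Finset ι) (q : ι → ℝ)
    (h0 : ∀ i, 0 ≤ q i) (h1 : ∀ i, q i ≤ 1) :
    1 - ∏ i ∈ s, q i ≤ ∑ i ∈ s, (1 - q i) := by
  induction s using Finset.induction_on with
  | empty => simp
  | @insert a s ha ih =>
    rw [Finset.prod_insert ha, Finset.sum_insert ha]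
    have hp : ∏ i ∈ s, q i ≤ 1 := Finset.prod_le_one (fun i _ => h0 i) (fun i _ => h1 i)
    have hp0 : 0 ≤ ∏ i ∈ s, q i := Finset.prod_nonneg fun i _ => h0 i
    nlinarith [h0 a, h1 a]

lemma prod_ite_eq_ite (n : ℕ) (k : Fin n → ℕ) (x : Fin n → ℕ) :
    (∏ j, (if x j = k j then (1:ℝ) else 0)) = if x = k then 1 else 0 := by
  by_cases h : x = k
  · subst h; simp
  · rw [if_neg h]
    obtain ⟨j, hj⟩ : ∃ j, x j ≠ k j := by
      by_contra hc; push_neg at hc; exact h (funext hc)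
    exact Finset.prod_eq_zero (Finset.mem_univ j) (if_neg hj)

lemma core (n : ℕ) (k : Fin n → ℕ) (hk : ∀ j, 1 ≤ k j) (σ : Fin n → ℝ)
    (hpos : ∀ j, 0 < σ j) (hle : ∀ j, σ j ≤ 1) :
    (∑' x : Fin n → ℕ,
        |(∏ j, deathBirthWeight (k j) (σ j) (x j)
              / ∑' y : ℕ, deathBirthWeight (k j) (σ j) y)
          - ∏ j, (if x j = k j then (1 : ℝ) else 0)|)
      ≤ ∑ j, 2 * 2 ^ (k j + 1) * σ j := by
  classical
  set π : Fin n → ℕ → ℝ := fun j y =>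
    deathBirthWeight (k j) (σ j) y / ∑' y' : ℕ, deathBirthWeight (k j) (σ j) y' with hπdef
  have hZ1 : ∀ j, 1 ≤ ∑' y : ℕ, deathBirthWeight (k j) (σ j) y :=
    fun j => Z_ge_one (k j) (hk j) (hpos j).le (hle j)
  have hZpos : ∀ j, 0 < ∑' y : ℕ, deathBirthWeight (k j) (σ j) y :=
    fun j => lt_of_lt_of_le one_pos (hZ1 j)
  have hZ2 : ∀ j, (∑' y : ℕ, deathBirthWeight (k j) (σ j) y) ≤ 1 + σ j * 2 ^ (k j + 1) :=
    fun j => Z_le (k j) (hk j) (hpos j).le (hle j)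
  have hwsum : ∀ j, Summable (deathBirthWeight (k j) (σ j)) :=
    fun j => summable_dbw (k j) (hk j) (hpos j).le (hle j)
  have hπnn : ∀ j y, 0 ≤ π j y :=
    fun j y => div_nonneg (dbw_nonneg (k j) (hpos j).le y) (hZpos j).le
  have hπsum : ∀ j, Summable (π j) := fun j => (hwsum j).div_const _
  have hπtsum : ∀ j, (∑' y : ℕ, π j y) = 1 := by
    intro j
    rw [hπdef]
    simp only []
    rw [tsum_div_const, div_self (hZpos j).ne']
  have hπk : ∀ j, π j (k j) = (∑' y : ℕ, deathBirthWeight (k j) (σ j) y)⁻¹ := by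
    intro j
    rw [hπdef]
    simp only []
    rw [dbw_self, one_div]
  obtain ⟨hPsum, hPtsum⟩ := tsum_pi_prod n π hπnn hπsum
  have hPtsum1 : (∑' x : Fin n → ℕ, ∏ j, π j (x j)) = 1 := by
    rw [hPtsum]
    rw [Finset.prod_congr rfl (fun j _ => hπtsum j), Finset.prod_const_one]
  have hPk : (∏ j, π j (k j)) = ∏ j, (∑' y : ℕ, deathBirthWeight (k j) (σ j) y)⁻¹ :=
    Finset.prod_congr rfl (fun j _ => hπk j)
  have hq0 : ∀ j, (0:ℝ) ≤ (∑' y : ℕ, deathBirthWeight (k j) (σ j) y)⁻¹ :=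
    fun j => inv_nonneg.mpr (hZpos j).le
  have hq1 : ∀ j, (∑' y : ℕ, deathBirthWeight (k j) (σ j) y)⁻¹ ≤ 1 :=
    fun j => inv_le_one_of_one_le₀ (hZ1 j)
  have hPk1 : (∏ j, π j (k j)) ≤ 1 := by
    rw [hPk]; exact Finset.prod_le_one (fun j _ => hq0 j) (fun j _ => hq1 j)
  have hPknn : 0 ≤ ∏ j, π j (k j) := Finset.prod_nonneg fun j _ => hπnn j (k j)
  have hδsum : Summable (fun x : Fin n → ℕ => if x = k then (1:ℝ) else 0) :=
    summable_of_ne_finset_zero (s := {k}) (fun x hx => by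
      simp at hx; simp [hx])
  have hstep1 : (∑' x : Fin n → ℕ,
      |(∏ j, deathBirthWeight (k j) (σ j) (x j)
            / ∑' y : ℕ, deathBirthWeight (k j) (σ j) y)
        - ∏ j, (if x j = k j then (1 : ℝ) else 0)|)
      = ∑' x : Fin n → ℕ, |(∏ j, π j (x j)) - (if x = k then (1:ℝ) else 0)| :=
    tsum_congr fun x => by rw [prod_ite_eq_ite n k x]
  rw [hstep1]
  have hhsum : Summable (fun x : Fin n → ℕ =>
      |(∏ j, π j (x j)) - (if x = k then (1:ℝ) else 0)|) := (hPsum.sub hδsum).abs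
  have hsplit := Summable.tsum_eq_add_tsum_ite hhsum k
  have hsplitP := Summable.tsum_eq_add_tsum_ite hPsum k
  have htail : (∑' x : Fin n → ℕ, if x = k then (0:ℝ) else
        |(∏ j, π j (x j)) - (if x = k then (1:ℝ) else 0)|)
      = ∑' x : Fin n → ℕ, if x = k then (0:ℝ) else ∏ j, π j (x j) := by
    apply tsum_congr
    intro x
    by_cases h : x = k
    · simp [h]
    · rw [if_neg h, if_neg h, if_neg h, sub_zero,
        abs_of_nonneg (Finset.prod_nonneg fun j _ => hπnn j (x j))]
  have hk1 : |(∏ j, π j (k j)) - (if k = k then (1:ℝ) else 0)| = 1 - ∏ j, π j (k j) := by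
    rw [if_pos rfl, abs_of_nonpos (by linarith), neg_sub]
  have hval : (∑' x : Fin n → ℕ, |(∏ j, π j (x j)) - (if x = k then (1:ℝ) else 0)|)
      = 2 * (1 - ∏ j, π j (k j)) := by
    rw [hsplit, hk1, htail]
    have : (∑' x : Fin n → ℕ, if x = k then (0:ℝ) else ∏ j, π j (x j))
        = 1 - ∏ j, π j (k j) := by
      have := hsplitP
      rw [hPtsum1] at this
      linarith
    rw [this]
    ring
  rw [hval, hPk]
  have hsum_bound : 1 - (∏ j, (∑' y : ℕ, deathBirthWeight (k j) (σ j) y)⁻¹)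
      ≤ ∑ j, (1 - (∑' y : ℕ, deathBirthWeight (k j) (σ j) y)⁻¹) :=
    one_sub_prod_le Finset.univ _ hq0 hq1
  have hterm : ∀ j, 2 * (1 - (∑' y : ℕ, deathBirthWeight (k j) (σ j) y)⁻¹)
      ≤ 2 * 2 ^ (k j + 1) * σ j := by
    intro j
    have hZp := hZpos j
    have hinv : (∑' y : ℕ, deathBirthWeight (k j) (σ j) y)
        * (∑' y : ℕ, deathBirthWeight (k j) (σ j) y)⁻¹ = 1 := mul_inv_cancel₀ hZp.ne'
    have h3 : 0 ≤ 1 - (∑' y : ℕ, deathBirthWeight (k j) (σ j) y)⁻¹ := by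
      linarith [hq1 j]
    nlinarith [hZ1 j, hZ2 j, mul_nonneg (sub_nonneg.mpr (hZ1 j)) h3]
  calc 2 * (1 - ∏ j, (∑' y : ℕ, deathBirthWeight (k j) (σ j) y)⁻¹)
      ≤ 2 * ∑ j, (1 - (∑' y : ℕ, deathBirthWeight (k j) (σ j) y)⁻¹) := by linarith
    _ = ∑ j, 2 * (1 - (∑' y : ℕ, deathBirthWeight (k j) (σ j) y)⁻¹) := by
        rw [Finset.mul_sum]
    _ ≤ ∑ j, 2 * 2 ^ (k j + 1) * σ j := Finset.sum_le_sum fun j _ => hterm j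

/-- For targets `k_j ≥ 1` and rates `c > 0`, `d_j > 0` with
`σ_j = c/d_j`, the product of the single-coordinate stationary PMFs
`π^{(j)}_{σ_j}(x) = w_j(x)/Σ_y w_j(y)` satisfies the joint stationarity equation of the
reduced higher-resolution interfacing network (births `∅ → X_j` at rate `c`, deaths
with propensity `d_j·x_j^{(k_j+1)}`; the PMF extended by `0` on negative coordinates),
and converges in ℓ1 to the product of Kronecker deltas at `(k₁,…,k_n)` as the
(positive) vector `σ` tends to `0`. -/
theorem joint_higher_resolution
    (n : ℕ) (hn : 1 ≤ n) (k : Fin n → ℕ) (hk : ∀ j, 1 ≤ k j) :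
    (∀ (c : ℝ) (d : Fin n → ℝ), 0 < c → (∀ j, 0 < d j) →
      ∀ pZ : (Fin n → ℤ) → ℝ,
        (pZ = fun x => ∏ j,
          (if 0 ≤ x j then
            deathBirthWeight (k j) (c / d j) (x j).toNat
              / ∑' y : ℕ, deathBirthWeight (k j) (c / d j) y
           else 0)) →
        ∀ x : Fin n → ℕ,
          ∑ j, (c * (pZ (Function.update (fun j' => ((x j' : ℤ))) j ((x j : ℤ) - 1))
                      - pZ (fun j' => (x j' : ℤ)))
              + d j * (((x j + 1).descFactorial (k j + 1) : ℝ)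
                          * pZ (Function.update (fun j' => ((x j' : ℤ))) j ((x j : ℤ) + 1))
                       - ((x j).descFactorial (k j + 1) : ℝ)
                          * pZ (fun j' => (x j' : ℤ)))) = 0) ∧
    Filter.Tendsto
      (fun σ : Fin n → ℝ => ∑' x : Fin n → ℕ,
        |(∏ j, deathBirthWeight (k j) (σ j) (x j)
              / ∑' y : ℕ, deathBirthWeight (k j) (σ j) y)
          - ∏ j, (if x j = k j then (1 : ℝ) else 0)|)
      (nhdsWithin 0 {σ : Fin n → ℝ | ∀ j, 0 < σ j}) (nhds 0) := by
  constructor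
  · exact fun c d hc hd pZ hpZ x => part1 n k c d hc hd pZ hpZ x
  · apply squeeze_zero' (g := fun σ : Fin n → ℝ => ∑ j, 2 * 2 ^ (k j + 1) * σ j)
    · exact Filter.Eventually.of_forall fun σ => tsum_nonneg fun x => abs_nonneg _
    · have h1 : ∀ᶠ σ : Fin n → ℝ in nhdsWithin 0 {σ : Fin n → ℝ | ∀ j, 0 < σ j},
          σ ∈ {σ : Fin n → ℝ | ∀ j, 0 < σ j} := eventually_mem_nhdsWithin
      have h2 : ∀ᶠ σ : Fin n → ℝ in nhds (0 : Fin n → ℝ), ∀ j, σ j < 1 := by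
        apply Filter.eventually_all.mpr
        intro j
        exact ((continuous_apply j).tendsto (0 : Fin n → ℝ)).eventually_lt_const
          (by norm_num : ((0 : Fin n → ℝ) j) < 1)
      filter_upwards [h1, h2.filter_mono nhdsWithin_le_nhds] with σ hσpos hσlt
      exact core n k hk σ hσpos (fun j => (hσlt j).le)
    · have hcont : Continuous (fun σ : Fin n → ℝ => ∑ j, 2 * 2 ^ (k j + 1) * σ j) := by
        apply continuous_finset_sum
        intro j _
        exact continuous_const.mul (continuous_apply j)
      have := hcont.tendsto (0 : Fin n → ℝ)
      have h0 : (∑ j, 2 * 2 ^ (k j + 1) * ((0 : Fin n → ℝ) j)) = 0 := by simp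
      rw [h0] at this
      exact this.mono_left nhdsWithin_le_nhds
end
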